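/- arXiv:2104.07883 — 3 statements merged into one kernel-verified Lean document; each statement's English description precedes it below -/
import Mathlib

section
/- Let η belong to an irreducible component C of a general KCM, let x ∈ {η}_L^ω be a site in the closure of η, and suppose η_x ∉ I_x. Then every configuration η′ ∈ S_L with η′_y = η_y for all y ∈ L∖{x} (and η′_x ∈ S_x arbitrary) also belongs to C. -/
open scoped Classical

namespace KCM

/-- A full configuration assigns a state to every site of `ℤ`.  The boundary
condition is the restriction of a configuration outside the volume. -/
abbrev Config (S : ℤ → Type) : Type := ∀ x : ℤ, S x

variable {S : ℤ → Type}

/-- The constraint at site `x` is satisfied in configuration `η`: some update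
rule of `x` has all its sites infected. -/
def Constraint (I : ∀ x : ℤ, Set (S x)) (U : ℤ → Finset (Finset ℤ)) (x : ℤ)
    (η : Config S) : Prop :=
  ∃ u ∈ U x, ∀ y ∈ u, η y ∈ I y

/-- A legal transition of the KCM on volume `L`: the two configurations agree
off a single site `x ∈ L` whose constraint is satisfied. -/
def Step (I : ∀ x : ℤ, Set (S x)) (U : ℤ → Finset (Finset ℤ)) (L : Finset ℤ)
    (η η' : Config S) : Prop :=
  ∃ x ∈ L, Constraint I U x η ∧ ∀ y : ℤ, y ≠ x → η' y = η y

/-- `η` and `η'` belong to the same irreducible component of the KCM on volume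
`L` (connected component of the transition graph on configurations). -/
def Reach (I : ∀ x : ℤ, Set (S x)) (U : ℤ → Finset (Finset ℤ)) (L : Finset ℤ)
    (η η' : Config S) : Prop :=
  Relation.ReflTransGen (fun ζ ζ' => Step I U L ζ ζ' ∨ Step I U L ζ' ζ) η η'

/-- The closure `{η}_L^ω`: the set of sites of `L` whose state can eventually
be updated starting from `η`. -/
def closure (I : ∀ x : ℤ, Set (S x)) (U : ℤ → Finset (Finset ℤ)) (L : Finset ℤ)
    (η : Config S) : Set ℤ :=
  {x | x ∈ L ∧ ∃ η', Reach I U L η η' ∧ Constraint I U x η'}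

/-- Replace the states of `η` inside `Λ` by `ξ`. -/
def glue (Λ : Finset ℤ) (η : Config S) (ξ : ∀ x : {y : ℤ // y ∈ Λ}, S x.1) :
    Config S :=
  fun x => if h : x ∈ Λ then ξ ⟨x, h⟩ else η x

variable [∀ x, Fintype (S x)]

/-- Expectation of `f` when the states of `η` inside `Λ` are resampled from the
product of the measures `π x`, `x ∈ Λ`, conditioned on the event `P`. -/
noncomputable def expOn (π : ∀ x : ℤ, S x → ℝ) (Λ : Finset ℤ)
    (P : Config S → Prop) (η : Config S) (f : Config S → ℝ) : ℝ :=
  (∑ ξ : ∀ x : {y : ℤ // y ∈ Λ}, S x.1,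
      if P (glue Λ η ξ) then (∏ x : {y : ℤ // y ∈ Λ}, π x.1 (ξ x)) * f (glue Λ η ξ) else 0) /
  (∑ ξ : ∀ x : {y : ℤ // y ∈ Λ}, S x.1,
      if P (glue Λ η ξ) then (∏ x : {y : ℤ // y ∈ Λ}, π x.1 (ξ x)) else 0)

/-- Variance of `f` when the states of `η` inside `Λ` are resampled from the
product of the measures `π x`, `x ∈ Λ`, conditioned on the event `P`. -/
noncomputable def varOn (π : ∀ x : ℤ, S x → ℝ) (Λ : Finset ℤ)
    (P : Config S → Prop) (η : Config S) (f : Config S → ℝ) : ℝ :=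
  expOn π Λ P η (fun ζ => (f ζ - expOn π Λ P η f) ^ 2)

end KCM

/-! Follow a path from `η` to a configuration in which the constraint at `x` holds.
As long as the state at `x` stays the one of `η`, it is not infected, so no constraint used along
the path relies on it and every step can be replayed with `x` set to any other state. The first
step that changes `x` (or the end of the path) is a configuration where `x` may be updated
directly. -/

namespace KCM

section

variable {S : ℤ → Type} {I : ∀ x : ℤ, Set (S x)} {U : ℤ → Finset (Finset ℤ)} {L : Finset ℤ}

theorem Reach.trans {η ζ ξ : Config S} (h₁ : Reach I U L η ζ) (h₂ : Reach I U L ζ ξ) :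
    Reach I U L η ξ :=
  Relation.ReflTransGen.trans h₁ h₂

theorem Step.reach {η ζ : Config S} (h : Step I U L η ζ) : Reach I U L η ζ :=
  Relation.ReflTransGen.single (Or.inl h)

theorem Step.reach_symm {η ζ : Config S} (h : Step I U L η ζ) : Reach I U L ζ η :=
  Relation.ReflTransGen.single (Or.inr h)

theorem Constraint.update_of_notMem {x z : ℤ} {η : Config S} (hηx : η x ∉ I x)
    (h : Constraint I U z η) (a : S x) : Constraint I U z (Function.update η x a) := by
  obtain ⟨u, hu, hinf⟩ := h
  refine ⟨u, hu, fun y hy => ?_⟩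
  have hyx : y ≠ x := by
    rintro rfl
    exact hηx (hinf y hy)
  rw [Function.update_of_ne hyx]
  exact hinf y hy

theorem Step.update_of_notMem {x : ℤ} {η ζ : Config S} (h : Step I U L η ζ) (hηx : η x ∉ I x)
    (hζx : ζ x = η x) (a : S x) :
    Step I U L (Function.update η x a) (Function.update ζ x a) := by
  obtain ⟨z, hzL, hcon, hagree⟩ := h
  refine ⟨z, hzL, hcon.update_of_notMem hηx a, fun y hyz => ?_⟩
  by_cases hyx : y = x
  · subst hyx
    simp
  · simp only [Function.update_of_ne hyx]
    exact hagree y hyz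

theorem reach_update_of_constraint {x : ℤ} (hxL : x ∈ L) {η : Config S}
    (h : Constraint I U x η) (a : S x) : Reach I U L η (Function.update η x a) :=
  Step.reach ⟨x, hxL, h, fun _ hy => Function.update_of_ne hy _ _⟩

theorem Step.reach_update_of_ne {x : ℤ} {η ζ : Config S} (h : Step I U L η ζ)
    (hx : ζ x ≠ η x) (a : S x) :
    Reach I U L η (Function.update η x a) ∧ Reach I U L ζ (Function.update ζ x a) := by
  obtain ⟨z, hzL, hcon, hagree⟩ := h
  obtain rfl : z = x := by
    by_contra hzx
    exact hx (hagree x (Ne.symm hzx))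
  have hη : Reach I U L η (Function.update η z a) := reach_update_of_constraint hzL hcon a
  have hupdate : Function.update ζ z a = Function.update η z a := by
    funext y
    by_cases hy : y = z
    · subst hy
      simp
    · simp only [Function.update_of_ne hy]
      exact hagree y hy
  exact ⟨hη, hupdate ▸ (Step.reach_symm ⟨z, hzL, hcon, hagree⟩).trans hη⟩

theorem reach_update_of_reach_constraint {x : ℤ} (hxL : x ∈ L) {η ξ : Config S}
    (hreach : Reach I U L η ξ) (hcon : Constraint I U x ξ) (hηx : η x ∉ I x) (a : S x) :
    Reach I U L η (Function.update η x a) := by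
  induction hreach using Relation.ReflTransGen.head_induction_on with
  | refl => exact reach_update_of_constraint hxL hcon a
  | @head η ζ hadj _ ih =>
    by_cases hx : ζ x = η x
    · have hmirror :
          Step I U L (Function.update η x a) (Function.update ζ x a) ∨
            Step I U L (Function.update ζ x a) (Function.update η x a) :=
        hadj.imp (fun h => h.update_of_notMem hηx hx a)
          (fun h => h.update_of_notMem (hx ▸ hηx) hx.symm a)
      have hζ : Reach I U L ζ (Function.update ζ x a) := ih (hx ▸ hηx)
      have hηζ : Reach I U L η ζ := Relation.ReflTransGen.single hadj
      have hback : Reach I U L (Function.update ζ x a) (Function.update η x a) :=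
        Relation.ReflTransGen.single hmirror.symm
      exact hηζ.trans (hζ.trans hback)
    · rcases hadj with h | h
      · exact (h.reach_update_of_ne hx a).1
      · exact (h.reach_update_of_ne (Ne.symm hx) a).2

end

theorem statement3_general (S : ℤ → Type) (L : Finset ℤ)
    (I : ∀ x : ℤ, Set (S x)) (U : ℤ → Finset (Finset ℤ))
    (η : Config S) (x : ℤ) (hx : x ∈ closure I U L η) (hηx : η x ∉ I x)
    (η' : Config S) (hη' : ∀ y : ℤ, y ≠ x → η' y = η y) :
    Reach I U L η η' := by
  obtain ⟨hxL, ξ, hreach, hcon⟩ := hx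
  have hη'_eq : η' = Function.update η x (η' x) := Function.eq_update_iff.2 ⟨rfl, hη'⟩
  rw [hη'_eq]
  exact reach_update_of_reach_constraint hxL hreach hcon hηx (η' x)

/-- If `x` is in the closure of `η` and `η` is not infected at
`x`, then changing the state at `x` arbitrarily stays in the same irreducible
component. -/
theorem statement3 (S : ℤ → Type) [∀ x, Fintype (S x)] (L : Finset ℤ)
    (q R : ℝ)
    (hq0 : 0 < q) (hq1 : q ≤ 1) (hR : 1 ≤ R)
    (π : ∀ x : ℤ, S x → ℝ) (I : ∀ x : ℤ, Set (S x)) (U : ℤ → Finset (Finset ℤ))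
    (hπpos : ∀ (x : ℤ) (s : S x), 0 < π x s)
    (hπsum : ∀ x : ℤ, ∑ s : S x, π x s = 1)
    (hπI : ∀ x : ℤ, q ≤ ∑ s : S x, if s ∈ I x then π x s else 0)
    (hUx : ∀ x ∈ L, ∀ u ∈ U x, x ∉ u)
    (hUR : ∀ x ∈ L, ∀ u ∈ U x, ∀ y ∈ u, ((|y - x| : ℤ) : ℝ) ≤ R)
    (η : Config S) (x : ℤ) (hx : x ∈ closure I U L η) (hηx : η x ∉ I x)
    (η' : Config S) (hη' : ∀ y : ℤ, y ≠ x → η' y = η y) :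
    Reach I U L η η' :=
  statement3_general S L I U η x hx hηx η' hη'

end KCM
end

section
/- Let C be an irreducible component of a general KCM with infection probability q, and let K = {η}_L^ω be the common closure of the configurations in C. Then under μ_L = π_L(·|C) the family of infection indicators (1_{η_x ∈ I_x})_{x∈K} stochastically dominates a family of i.i.d. Bernoulli(q) random variables: for every function g : {0,1}^K → ℝ that is nondecreasing in each coordinate, the μ_L-expectation of g((1_{η_x ∈ I_x})_{x∈K}) is at least the expectation of g under the product Bernoulli(q) measure on {0,1}^K. -/
/-!
Fix a site `x` of the closure and the states of all other sites. Since `x` can be updated from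
somewhere in the component, and infecting `x` only helps the constraints of the other sites,
infecting `x` never leaves the component: the admissible states at `x` form either the empty set
or a superset of `I x`. Hence, conditionally on everything else, `x` is infected with probability
at least `π x (I x) ≥ q`, and replacing the indicator at `x` by an independent Bernoulli(`q`)
variable can only decrease the mean of a nondecreasing function. Doing this for every site of the
closure in turn replaces the whole family by i.i.d. Bernoulli(`q`) variables.
-/

open scoped Classical

open Finset Function

noncomputable def bernWeight (q : ℝ) (b : Bool) : ℝ := if b = true then q else 1 - q

theorem sum_bernWeight (q : ℝ) : ∑ b, bernWeight q b = 1 := by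
  simp [bernWeight]

theorem bernWeight_nonneg {q : ℝ} (hq0 : 0 ≤ q) (hq1 : q ≤ 1) (b : Bool) : 0 ≤ bernWeight q b := by
  unfold bernWeight; split_ifs <;> linarith

theorem sum_mul_ite_sum_bernWeight_le {Y : Type*} [Fintype Y] {w : Y → ℝ} (hw0 : ∀ s, 0 ≤ w s)
    (hw1 : ∑ s, w s = 1) {A B : Set Y} {q : ℝ} (hq0 : 0 ≤ q)
    (hqA : q ≤ ∑ s, if s ∈ A then w s else 0) (hB : ∀ s ∈ B, A ⊆ B) {f : Bool → ℝ}
    (hf : f false ≤ f true) :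
    ∑ s, w s * (if s ∈ B then ∑ b, bernWeight q b * f b else 0) ≤
      ∑ s, w s * (if s ∈ B then f (decide (s ∈ A)) else 0) := by
  simp only [Fintype.sum_bool, bernWeight, if_true, Bool.false_eq_true, if_false]
  rcases B.eq_empty_or_nonempty with rfl | ⟨s₀, hs₀⟩
  · simp
  have hAB := hB s₀ hs₀
  -- summed over `s`, the left-hand sides give `(f true - f false) * (w A - q) ≥ 0`
  have key : ∀ s, (f true - f false) * ((if s ∈ A then w s else 0) - q * w s) ≤
      w s * (if s ∈ B then f (decide (s ∈ A)) else 0) -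
        w s * (if s ∈ B then q * f true + (1 - q) * f false else 0) := by
    intro s
    by_cases hsA : s ∈ A
    · simp only [hsA, hAB hsA, if_true, decide_true]
      linarith
    by_cases hsB : s ∈ B
    · simp only [hsA, hsB, if_true, if_false, decide_false]
      linarith
    · simp only [hsA, hsB, if_false]
      nlinarith [mul_nonneg (mul_nonneg (hw0 s) hq0) (sub_nonneg.mpr hf)]
  have hsum := sum_le_sum fun s (_ : s ∈ univ) => key s
  rw [← mul_sum, sum_sub_distrib, ← mul_sum, hw1, sum_sub_distrib] at hsum
  nlinarith [sub_nonneg.mpr hf]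

section ProductWeights

variable {ι : Type*} [Fintype ι] [DecidableEq ι] {X : ι → Type*} [∀ i, Fintype (X i)]

/-- Resampling one coordinate from its own marginal leaves a product measure invariant. -/
theorem sum_prod_mul_eq_sum_prod_mul_sum_update (w : ∀ i, X i → ℝ) (i : ι)
    (hw : ∑ s, w i s = 1) (G : (∀ j, X j) → ℝ) :
    ∑ ξ, (∏ j, w j (ξ j)) * G ξ = ∑ ξ, (∏ j, w j (ξ j)) * ∑ s, w i s * G (update ξ i s) := by
  have hswap : ∀ ξ s, (∏ j, w j (ξ j)) * w i s = (∏ j, w j (update ξ i s j)) * w i (ξ i) := by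
    intro ξ s
    simp only [apply_update w, prod_update_of_mem (mem_univ i), Fintype.prod_eq_mul_prod_compl i,
      compl_eq_univ_sdiff]
    ring
  let e : Equiv.Perm ((∀ j, X j) × X i) :=
    Involutive.toPerm (fun p => (update p.1 i p.2, p.1 i)) fun p => by simp
  calc ∑ ξ, (∏ j, w j (ξ j)) * G ξ
      = ∑ p : (∀ j, X j) × X i, (∏ j, w j (p.1 j)) * w i p.2 * G p.1 := by
        simp only [Fintype.sum_prod_type, mul_assoc, mul_left_comm _ (w i _), ← sum_mul, hw,
          one_mul]
    _ = ∑ p : (∀ j, X j) × X i, (∏ j, w j ((e p).1 j)) * w i (e p).2 * G (e p).1 :=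
        (Equiv.sum_comp e _).symm
    _ = ∑ ξ, (∏ j, w j (ξ j)) * ∑ s, w i s * G (update ξ i s) := by
        simp only [Fintype.sum_prod_type, mul_sum]
        refine sum_congr rfl fun ξ _ => sum_congr rfl fun s _ => ?_
        change (∏ j, w j (update ξ i s j)) * w i (ξ i) * G (update ξ i s) = _
        rw [← hswap]
        ring

theorem sum_ite_prod_mul_sum_bernWeight_le (w : ∀ i, X i → ℝ) (hw0 : ∀ i s, 0 ≤ w i s) (i : ι)
    (hw1 : ∑ s, w i s = 1) {A : Set (X i)} {q : ℝ} (hq0 : 0 ≤ q)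
    (hqA : q ≤ ∑ s, if s ∈ A then w i s else 0) {C : (∀ j, X j) → Prop}
    (hC : ∀ ξ, C ξ → ∀ s ∈ A, C (update ξ i s)) {F : (∀ j, X j) → Bool → ℝ}
    (hF : ∀ ξ s, F (update ξ i s) = F ξ) (hFmono : ∀ ξ, F ξ false ≤ F ξ true) :
    ∑ ξ, (if C ξ then (∏ j, w j (ξ j)) * ∑ b, bernWeight q b * F ξ b else 0) ≤
      ∑ ξ, (if C ξ then (∏ j, w j (ξ j)) * F ξ (decide (ξ i ∈ A)) else 0) := by
  simp only [← mul_ite_zero]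
  rw [sum_prod_mul_eq_sum_prod_mul_sum_update w i hw1 fun ξ => if C ξ then _ else 0,
    sum_prod_mul_eq_sum_prod_mul_sum_update w i hw1
      fun ξ => if C ξ then F ξ (decide (ξ i ∈ A)) else 0]
  refine sum_le_sum fun ξ _ => mul_le_mul_of_nonneg_left ?_ (prod_nonneg fun j _ => hw0 j _)
  simp only [update_self, hF]
  exact sum_mul_ite_sum_bernWeight_le (hw0 i) hw1 (B := {s | C (update ξ i s)}) hq0 hqA
    (fun s hs t ht => by simpa using hC _ hs t ht) (hFmono ξ)

end ProductWeights

section BernoulliAverage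

variable {κ : Type*} [Fintype κ] [DecidableEq κ]

noncomputable def bernAvg (q : ℝ) (s : Finset κ) (h : (κ → Bool) → ℝ) (a : κ → Bool) : ℝ :=
  ∑ b : κ → Bool, (∏ z, bernWeight q (b z)) * h (s.piecewise b a)

theorem sum_prod_bernWeight (q : ℝ) : ∑ b : κ → Bool, ∏ z, bernWeight q (b z) = 1 := by
  rw [← Fintype.prod_sum fun _ => bernWeight q]
  simp only [sum_bernWeight, prod_const_one]

theorem bernAvg_empty (q : ℝ) (h : (κ → Bool) → ℝ) : bernAvg q ∅ h = h := by
  funext a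
  simp [bernAvg, ← sum_mul, sum_prod_bernWeight]

theorem bernAvg_univ (q : ℝ) (h : (κ → Bool) → ℝ) (a : κ → Bool) :
    bernAvg q univ h a = ∑ b : κ → Bool, (∏ z, bernWeight q (b z)) * h b := by
  simp [bernAvg]

theorem bernAvg_insert (q : ℝ) {s : Finset κ} {z : κ} (hz : z ∉ s) (h : (κ → Bool) → ℝ)
    (a : κ → Bool) :
    bernAvg q (insert z s) h a = ∑ t, bernWeight q t * bernAvg q s h (update a z t) := by
  have hpiece : ∀ b t, (insert z s).piecewise (update b z t) a = s.piecewise b (update a z t) := by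
    intro b t
    funext y
    by_cases hyz : y = z
    · subst hyz
      simp [hz]
    · by_cases hys : y ∈ s <;> simp [hyz, hys, piecewise]
  simp only [bernAvg, mul_sum]
  rw [sum_prod_mul_eq_sum_prod_mul_sum_update (fun _ => bernWeight q) z (sum_bernWeight q)]
  simp only [hpiece, mul_sum]
  rw [sum_comm]
  refine sum_congr rfl fun b _ => sum_congr rfl fun t _ => ?_
  ring

theorem monotone_bernAvg {q : ℝ} (hq0 : 0 ≤ q) (hq1 : q ≤ 1) (s : Finset κ)
    {h : (κ → Bool) → ℝ} (hh : Monotone h) : Monotone (bernAvg q s h) := fun _ _ haa' =>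
  sum_le_sum fun b _ => mul_le_mul_of_nonneg_left (hh (piecewise_le_piecewise s le_rfl haa'))
    (prod_nonneg fun z _ => bernWeight_nonneg hq0 hq1 (b z))

end BernoulliAverage

namespace KCM

section Dynamics

variable {S : ℤ → Type} {I : ∀ x, Set (S x)} {U : ℤ → Finset (Finset ℤ)} {L : Finset ℤ}

theorem Constraint.update_of_mem {x y : ℤ} {η : Config S} (h : Constraint I U y η) {s : S x}
    (hs : s ∈ I x) : Constraint I U y (update η x s) := by
  obtain ⟨u, hu, hinf⟩ := h
  refine ⟨u, hu, fun w hw => ?_⟩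
  by_cases hwx : w = x
  · subst hwx
    simpa using hs
  · simpa [hwx] using hinf w hw

theorem constraint_iff_of_eq_of_ne {x : ℤ} (hx : ∀ u ∈ U x, x ∉ u) {η η' : Config S}
    (hagree : ∀ y, y ≠ x → η' y = η y) : Constraint I U x η' ↔ Constraint I U x η := by
  have hagree' : ∀ u ∈ U x, ∀ y ∈ u, η' y = η y := fun u hu y hy =>
    hagree y fun hyx => hx u hu (hyx ▸ hy)
  exact exists_congr fun u => and_congr_right fun hu =>
    forall₂_congr fun y hy => by rw [hagree' u hu y hy]

theorem Step.symm (hUx : ∀ x ∈ L, ∀ u ∈ U x, x ∉ u) {η η' : Config S}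
    (h : Step I U L η η') : Step I U L η' η := by
  obtain ⟨x, hxL, hc, hagree⟩ := h
  exact ⟨x, hxL, (constraint_iff_of_eq_of_ne (hUx x hxL) hagree).mpr hc,
    fun y hy => (hagree y hy).symm⟩

theorem Reach.symm {η η' : Config S} (h : Reach I U L η η') : Reach I U L η' η :=
  have : Std.Symm fun ζ ζ' => Step I U L ζ ζ' ∨ Step I U L ζ' ζ := ⟨fun _ _ => Or.symm⟩
  Relation.ReflTransGen.stdSymm.symm _ _ h

/-- Along a path to a configuration where `x` can be updated, each configuration either updates `x`
itself or is linked, after infecting `x`, to the infected copy of its successor: infecting `x`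
keeps every other constraint satisfied. -/
theorem reach_update_of_reach_constraint_s5 (hUx : ∀ x ∈ L, ∀ u ∈ U x, x ∉ u) {x : ℤ} (hxL : x ∈ L)
    {η η' : Config S} (hre : Reach I U L η η') (hc : Constraint I U x η') {s : S x}
    (hs : s ∈ I x) : Reach I U L η (update η x s) := by
  induction hre using Relation.ReflTransGen.head_induction_on with
  | refl => exact .single (.inl ⟨x, hxL, hc, fun y hy => update_of_ne hy _ _⟩)
  | @head a c hac _ ih =>
    obtain ⟨y, hyL, hcy, hagree⟩ : Step I U L c a := hac.elim (Step.symm hUx) id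
    by_cases hyx : y = x
    · subst hyx
      have hay := (constraint_iff_of_eq_of_ne (hUx y hyL) hagree).mpr hcy
      exact .single (.inl ⟨y, hyL, hay, fun w hw => update_of_ne hw _ _⟩)
    · have hstep : Step I U L (update c x s) (update a x s) := by
        refine ⟨y, hyL, hcy.update_of_mem hs, fun w hw => ?_⟩
        by_cases hwx : w = x
        · subst hwx
          simp
        · simp [hwx, hagree w hw]
      exact .head hac (ih.tail (.inl hstep))

theorem reach_update_of_mem_closure (hUx : ∀ x ∈ L, ∀ u ∈ U x, x ∉ u) {η₀ η : Config S}
    {x : ℤ} (hx : x ∈ closure I U L η₀) (hη : Reach I U L η₀ η) {s : S x} (hs : s ∈ I x) :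
    Reach I U L η₀ (update η x s) := by
  obtain ⟨hxL, η', hη', hc⟩ := hx
  exact hη.trans (reach_update_of_reach_constraint_s5 hUx hxL (hη.symm.trans hη') hc hs)

theorem glue_update (Λ : Finset ℤ) (η : Config S) {x : ℤ} (hx : x ∈ Λ)
    (ξ : ∀ v : {y : ℤ // y ∈ Λ}, S v.1) (s : S x) :
    glue Λ η (update ξ ⟨x, hx⟩ s) = update (glue Λ η ξ) x s := by
  funext y
  by_cases hyx : y = x
  · subst hyx
    simp [glue, hx]
  · have hne : ∀ hy : y ∈ Λ, (⟨y, hy⟩ : {y : ℤ // y ∈ Λ}) ≠ ⟨x, hx⟩ :=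
      fun _ h => hyx (congrArg Subtype.val h)
    by_cases hy : y ∈ Λ <;> simp [glue, hy, hyx, hne]

theorem glue_self (Λ : Finset ℤ) (η : Config S) : glue Λ η (fun v => η v.1) = η := by
  funext y
  by_cases hy : y ∈ Λ <;> simp [glue, hy]

noncomputable def infectionPattern (I : ∀ x, Set (S x)) (K : Finset ℤ) (η : Config S) :
    {y : ℤ // y ∈ K} → Bool :=
  fun z => if η z.1 ∈ I z.1 then true else false

theorem update_infectionPattern_update {K : Finset ℤ} (η : Config S) (z : {y : ℤ // y ∈ K})
    (s : S z.1) (b : Bool) :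
    update (infectionPattern I K (update η z.1 s)) z b = update (infectionPattern I K η) z b := by
  funext y
  by_cases hyz : y = z
  · subst hyz
    simp
  · have hne : y.1 ≠ z.1 := fun h => hyz (Subtype.ext h)
    simp [hyz, infectionPattern, hne]

end Dynamics

section Expectation

variable {S : ℤ → Type} [∀ x, Fintype (S x)]

noncomputable def unnormExpOn (π : ∀ x : ℤ, S x → ℝ) (Λ : Finset ℤ) (P : Config S → Prop)
    (η : Config S) (f : Config S → ℝ) : ℝ :=
  ∑ ξ : ∀ x : {y : ℤ // y ∈ Λ}, S x.1,
    if P (glue Λ η ξ) then (∏ x : {y : ℤ // y ∈ Λ}, π x.1 (ξ x)) * f (glue Λ η ξ) else 0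

variable {π : ∀ x : ℤ, S x → ℝ} {Λ : Finset ℤ} {P : Config S → Prop} {η : Config S}

theorem expOn_eq_div (f : Config S → ℝ) :
    expOn π Λ P η f = unnormExpOn π Λ P η f / unnormExpOn π Λ P η 1 := by
  simp [expOn, unnormExpOn]

theorem unnormExpOn_const (c : ℝ) :
    unnormExpOn π Λ P η (fun _ => c) = c * unnormExpOn π Λ P η 1 := by
  simp only [unnormExpOn, mul_sum, Pi.one_apply, mul_one, mul_ite_zero]
  exact sum_congr rfl fun ξ _ => by rw [mul_comm]

theorem unnormExpOn_one_pos (hπ : ∀ x s, 0 < π x s) (hη : P η) : 0 < unnormExpOn π Λ P η 1 := by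
  refine sum_pos' (fun ξ _ => ?_) ⟨fun v => η v.1, mem_univ _, ?_⟩
  · split_ifs
    · exact mul_nonneg (prod_nonneg fun v _ => (hπ _ _).le) zero_le_one
    · exact le_rfl
  · rw [glue_self, if_pos hη, Pi.one_apply, mul_one]
    exact prod_pos fun v _ => hπ _ _

end Expectation

section Domination

variable {S : ℤ → Type} [∀ x, Fintype (S x)] {I : ∀ x, Set (S x)} {U : ℤ → Finset (Finset ℤ)}
  {L : Finset ℤ}

theorem unnormExpOn_sum_bernWeight_le {q : ℝ} (hq0 : 0 ≤ q) {π : ∀ x : ℤ, S x → ℝ}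
    (hπ : ∀ x s, 0 ≤ π x s) (hπsum : ∀ x, ∑ s, π x s = 1)
    (hπI : ∀ x, q ≤ ∑ s : S x, if s ∈ I x then π x s else 0)
    (hUx : ∀ x ∈ L, ∀ u ∈ U x, x ∉ u) {η₀ : Config S} {K : Finset ℤ} {x : ℤ}
    (hx : x ∈ closure I U L η₀) (hxK : x ∈ K) {h : ({y : ℤ // y ∈ K} → Bool) → ℝ}
    (hh : Monotone h) :
    unnormExpOn π L (Reach I U L η₀) η₀
        (fun η => ∑ t, bernWeight q t * h (update (infectionPattern I K η) ⟨x, hxK⟩ t)) ≤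
      unnormExpOn π L (Reach I U L η₀) η₀ (fun η => h (infectionPattern I K η)) := by
  have hxL : x ∈ L := hx.1
  have hbound := sum_ite_prod_mul_sum_bernWeight_le (fun v : {y : ℤ // y ∈ L} => π v.1)
    (fun v s => hπ v s) ⟨x, hxL⟩ (hπsum x) (A := I x) hq0 (hπI x)
    (C := fun ξ => Reach I U L η₀ (glue L η₀ ξ))
    (fun ξ hξ s hs => by simpa [glue_update] using reach_update_of_mem_closure hUx hx hξ hs)
    (F := fun ξ t => h (update (infectionPattern I K (glue L η₀ ξ)) ⟨x, hxK⟩ t))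
    (fun ξ s => by
      funext t
      simpa [glue_update] using
        congrArg h (update_infectionPattern_update (I := I) (glue L η₀ ξ) ⟨x, hxK⟩ s t))
    (fun ξ => hh (update_mono (Bool.false_le true)))
  refine hbound.trans_eq (sum_congr rfl fun ξ _ => ?_)
  have hpat : infectionPattern I K (glue L η₀ ξ) ⟨x, hxK⟩ = decide (ξ ⟨x, hxL⟩ ∈ I x) := by
    simp [infectionPattern, glue, hxL]
  rw [← hpat, update_eq_self]

theorem unnormExpOn_bernAvg_le {q : ℝ} (hq0 : 0 ≤ q) (hq1 : q ≤ 1) {π : ∀ x : ℤ, S x → ℝ}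
    (hπ : ∀ x s, 0 ≤ π x s) (hπsum : ∀ x, ∑ s, π x s = 1)
    (hπI : ∀ x, q ≤ ∑ s : S x, if s ∈ I x then π x s else 0)
    (hUx : ∀ x ∈ L, ∀ u ∈ U x, x ∉ u) {η₀ : Config S} {K : Finset ℤ}
    (hK : ∀ x ∈ K, x ∈ closure I U L η₀) {g : ({y : ℤ // y ∈ K} → Bool) → ℝ} (hg : Monotone g)
    (s : Finset {y : ℤ // y ∈ K}) :
    unnormExpOn π L (Reach I U L η₀) η₀ (fun η => bernAvg q s g (infectionPattern I K η)) ≤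
      unnormExpOn π L (Reach I U L η₀) η₀ (fun η => g (infectionPattern I K η)) := by
  induction s using Finset.induction_on with
  | empty => simp only [bernAvg_empty, le_refl]
  | @insert z s hz ih =>
    simp only [bernAvg_insert q hz]
    exact (unnormExpOn_sum_bernWeight_le hq0 hπ hπsum hπI hUx (hK z.1 z.2) z.2
      (monotone_bernAvg hq0 hq1 s hg)).trans ih

end Domination

theorem statement5_general (S : ℤ → Type) [∀ x, Fintype (S x)] (L : Finset ℤ)
    (q : ℝ)
    (hq0 : 0 < q) (hq1 : q ≤ 1)
    (π : ∀ x : ℤ, S x → ℝ) (I : ∀ x : ℤ, Set (S x)) (U : ℤ → Finset (Finset ℤ))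
    (hπpos : ∀ (x : ℤ) (s : S x), 0 < π x s)
    (hπsum : ∀ x : ℤ, ∑ s : S x, π x s = 1)
    (hπI : ∀ x : ℤ, q ≤ ∑ s : S x, if s ∈ I x then π x s else 0)
    (hUx : ∀ x ∈ L, ∀ u ∈ U x, x ∉ u)
    (η₀ : Config S)
    (K : Finset ℤ) (hK : K = L.filter fun x => x ∈ closure I U L η₀)
    (g : ({y : ℤ // y ∈ K} → Bool) → ℝ)
    (hg : ∀ a b : {y : ℤ // y ∈ K} → Bool,
      (∀ z, a z = true → b z = true) → g a ≤ g b) :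
    (∑ a : {y : ℤ // y ∈ K} → Bool,
        (∏ z : {y : ℤ // y ∈ K}, if a z = true then q else 1 - q) * g a) ≤
      expOn π L (Reach I U L η₀) η₀
        (fun η => g (fun z => if η z.1 ∈ I z.1 then true else false)) := by
  have hZ := unnormExpOn_one_pos (Λ := L) (P := Reach I U L η₀) hπpos Relation.ReflTransGen.refl
  have hmono : Monotone g := fun a b hab => hg a b fun z => Bool.le_iff_imp.mp (hab z)
  have hKclosure : ∀ x ∈ K, x ∈ closure I U L η₀ := fun x hx => (mem_filter.mp (hK ▸ hx)).2
  have hdom := unnormExpOn_bernAvg_le hq0.le hq1 (fun x s => (hπpos x s).le) hπsum hπI hUx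
    hKclosure hmono univ
  simp only [bernAvg_univ, unnormExpOn_const] at hdom
  rw [expOn_eq_div, le_div_iff₀ hZ]
  exact hdom

/-- Under `μ_L = π_L(·|C)` the infection indicators on the
closure `K` stochastically dominate i.i.d. Bernoulli(q) variables: for every
coordinatewise nondecreasing `g : {0,1}^K → ℝ`, the `μ_L`-mean of
`g((1_{η x ∈ I x})_{x ∈ K})` is at least the Bernoulli(q) product mean of `g`. -/
theorem statement5 (S : ℤ → Type) [∀ x, Fintype (S x)] (L : Finset ℤ)
    (q R : ℝ)
    (hq0 : 0 < q) (hq1 : q ≤ 1) (hR : 1 ≤ R)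
    (π : ∀ x : ℤ, S x → ℝ) (I : ∀ x : ℤ, Set (S x)) (U : ℤ → Finset (Finset ℤ))
    (hπpos : ∀ (x : ℤ) (s : S x), 0 < π x s)
    (hπsum : ∀ x : ℤ, ∑ s : S x, π x s = 1)
    (hπI : ∀ x : ℤ, q ≤ ∑ s : S x, if s ∈ I x then π x s else 0)
    (hUx : ∀ x ∈ L, ∀ u ∈ U x, x ∉ u)
    (hUR : ∀ x ∈ L, ∀ u ∈ U x, ∀ y ∈ u, ((|y - x| : ℤ) : ℝ) ≤ R)
    (η₀ : Config S)
    (K : Finset ℤ) (hK : K = L.filter fun x => x ∈ closure I U L η₀)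
    (g : ({y : ℤ // y ∈ K} → Bool) → ℝ)
    (hg : ∀ a b : {y : ℤ // y ∈ K} → Bool,
      (∀ z, a z = true → b z = true) → g a ≤ g b) :
    (∑ a : {y : ℤ // y ∈ K} → Bool,
        (∏ z : {y : ℤ // y ∈ K}, if a z = true then q else 1 - q) * g a) ≤
      expOn π L (Reach I U L η₀) η₀
        (fun η => g (fun z => if η z.1 ∈ I z.1 then true else false)) :=
  statement5_general S L q hq0 hq1 π I U hπpos hπsum hπI hUx η₀ K hK g hg

end KCM
end

section
/- Consider a simplified general KCM on L = {1,…,|L|} with range R. Fix θ ∈ S_L with {θ}_L = L, and an integer x ≥ 0 such that the block B = {x+1,…,x+2R+1} ⊆ L is infected in θ (θ_y ∈ I_y for all y ∈ B). Then the closure of θ_{{1,…,x}} for the KCM on volume {1,…,x} with update families (U_y)_{y∈{1,…,x}} and boundary condition θ_{L∖{1,…,x}} equals all of {1,…,x}. -/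
open scoped Classical

namespace KCM

variable {S : ℤ → Type}

variable [∀ x, Fintype (S x)]

/-- Auxiliary: replace the states of `η` outside `{1,…,x}` by those of `θ`. -/
def proj (S : ℤ → Type) (x : ℤ) (θ η : Config S) : Config S :=
  fun y => if 1 ≤ y ∧ y ≤ x then η y else θ y

/-- For a simplified KCM on `{1,…,n}` whose closure is the
whole volume, an infected block `{x+1,…,x+2R+1}` isolates `{1,…,x}`: the
closure of `θ` on the volume `{1,…,x}` (with boundary condition `θ`
elsewhere) is all of `{1,…,x}`. -/
theorem statement8 (S : ℤ → Type) [∀ x, Fintype (S x)] (n : ℤ)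
    (q : ℝ) (R : ℕ)
    (hq0 : 0 < q) (hq1 : q ≤ 1) (hR : 1 ≤ R)
    (π : ∀ x : ℤ, S x → ℝ) (I : ∀ x : ℤ, Set (S x)) (U : ℤ → Finset (Finset ℤ))
    (hπpos : ∀ (x : ℤ) (s : S x), 0 < π x s)
    (hπsum : ∀ x : ℤ, ∑ s : S x, π x s = 1)
    (hπI : ∀ x : ℤ, q ≤ ∑ s : S x, if s ∈ I x then π x s else 0)
    (hUx : ∀ x ∈ Finset.Icc (1 : ℤ) n, ∀ u ∈ U x, x ∉ u)
    (hUR : ∀ x ∈ Finset.Icc (1 : ℤ) n, ∀ u ∈ U x, ∀ y ∈ u, |y - x| ≤ (R : ℤ))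
    (hUL : ∀ x ∈ Finset.Icc (1 : ℤ) n, ∀ u ∈ U x, u ⊆ Finset.Icc (1 : ℤ) n)
    (θ : Config S)
    (hθ : closure I U (Finset.Icc (1 : ℤ) n) θ = ↑(Finset.Icc (1 : ℤ) n))
    (x : ℤ) (hx0 : 0 ≤ x) (hxn : x + 2 * (R : ℤ) + 1 ≤ n)
    (hinf : ∀ y ∈ Finset.Icc (x + 1) (x + 2 * (R : ℤ) + 1), θ y ∈ I y) :
    closure I U (Finset.Icc (1 : ℤ) x) θ = ↑(Finset.Icc (1 : ℤ) x) := by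
  have hR0 : (0 : ℤ) ≤ R := Int.ofNat_nonneg R
  have hxn' : x ≤ n := by linarith
  -- constraint transfer from the big volume to the small one
  have hcons : ∀ (w : ℤ), 1 ≤ w → w ≤ x → ∀ η, Constraint I U w η →
      Constraint I U w (proj S x θ η) := by
    intro w hw1 hwx η hC
    obtain ⟨u, hu, hiu⟩ := hC
    refine ⟨u, hu, fun y hy => ?_⟩
    have hwn : w ∈ Finset.Icc (1 : ℤ) n := Finset.mem_Icc.mpr ⟨hw1, by linarith⟩
    have hyR := hUR w hwn u hu y hy
    have hy1 : 1 ≤ y := (Finset.mem_Icc.mp (hUL w hwn u hu hy)).1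
    rcases abs_le.mp hyR with ⟨_, h2⟩
    by_cases h : y ≤ x
    · have : (proj S x θ η) y = η y := by simp only [proj]; rw [if_pos ⟨hy1, h⟩]
      rw [this]; exact hiu y hy
    · have : (proj S x θ η) y = θ y := by
        simp only [proj]; rw [if_neg (fun hc => h hc.2)]
      rw [this]
      exact hinf y (Finset.mem_Icc.mpr ⟨by linarith, by linarith⟩)
  -- a step of the big dynamics projects to (at most) a step of the small one
  have key : ∀ ζ ζ', Step I U (Finset.Icc (1 : ℤ) n) ζ ζ' →
      proj S x θ ζ' = proj S x θ ζ ∨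
        Step I U (Finset.Icc (1 : ℤ) x) (proj S x θ ζ) (proj S x θ ζ') := by
    rintro ζ ζ' ⟨w, hw, hC, heq⟩
    have hw1 : 1 ≤ w := (Finset.mem_Icc.mp hw).1
    by_cases hwx : w ≤ x
    · right
      refine ⟨w, Finset.mem_Icc.mpr ⟨hw1, hwx⟩, hcons w hw1 hwx ζ hC, fun y hy => ?_⟩
      by_cases h : 1 ≤ y ∧ y ≤ x
      · simp only [proj]; rw [if_pos h, if_pos h]; exact heq y hy
      · simp only [proj]; rw [if_neg h, if_neg h]
    · left
      funext y
      by_cases h : 1 ≤ y ∧ y ≤ x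
      · simp only [proj]; rw [if_pos h, if_pos h]
        exact heq y (by intro hyw; subst hyw; exact hwx h.2)
      · simp only [proj]; rw [if_neg h, if_neg h]
  -- projected reachability
  have hprojθ : proj S x θ θ = θ := by
    funext y; simp only [proj]; split <;> rfl
  have hreach : ∀ η', Reach I U (Finset.Icc (1 : ℤ) n) θ η' →
      Reach I U (Finset.Icc (1 : ℤ) x) θ (proj S x θ η') := by
    intro η' h
    induction h with
    | refl => rw [hprojθ]; exact Relation.ReflTransGen.refl
    | tail hab hbc ih =>
        rcases hbc with hs | hs
        · rcases key _ _ hs with he | hst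
          · rw [he]; exact ih
          · exact ih.tail (Or.inl hst)
        · rcases key _ _ hs with he | hst
          · rw [← he]; exact ih
          · exact ih.tail (Or.inr hst)
  ext z
  constructor
  · rintro ⟨hz, -⟩
    exact_mod_cast hz
  · intro hz
    have hz' : z ∈ Finset.Icc (1 : ℤ) x := by exact_mod_cast hz
    rcases Finset.mem_Icc.mp hz' with ⟨hz1, hzx⟩
    have hzn : z ∈ closure I U (Finset.Icc (1 : ℤ) n) θ := by
      rw [hθ]
      exact_mod_cast Finset.mem_Icc.mpr ⟨hz1, by linarith⟩
    obtain ⟨-, η', hRe, hC⟩ := hzn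
    exact ⟨hz', proj S x θ η', hreach η' hRe, hcons z hz1 hzx η' hC⟩

end KCM
end
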